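/- For i = 1, …, w let (c_{i,k})_{k≥1} be nonnegative log-convex real sequences, set C_j = Σ_{i=1}^w c_{i,j}, define (A_k)_{k≥0} by A_0 = 1 and (n+1)·A_{n+1} = Σ_{j=1}^{n+1} C_j·A_{n+1−j}, and set B_k = k!·A_k. Then the inequalities m·B_{m−1}·B_{n+1} ≥ (n+1)·B_m·B_n hold for all 1 ≤ m ≤ n if and only if Σ_{i=1}^w c_{i,2} ≥ (Σ_{i=1}^w c_{i,1})²; moreover these inequalities are equivalent to A_{m−1}·A_{n+1} ≥ A_m·A_n for all 1 ≤ m ≤ n. -/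

import Mathlib

/-!
Normalising `C 0 = 1`, the recursion reads `∑_{t ≤ n} C_{n-t} A_t = (n+1) A_n`, i.e.
`(u A(u))' = C(u) A(u)`, and the condition `C₁² ≤ C₂` becomes log-convexity of `C` at `0`; by
Cauchy–Schwarz a sum of log-convex sequences is log-convex. Log-convexity of `A` then follows by
induction from the identity
`C_{N+1} (N+2) (A_N A_{N+2} - A_{N+1}²) = A_{N+1} (C_{N+2} A_N - C_{N+1} A_{N+1})
  + ∑_{t ≤ N} (C_{N-t} C_{N+2} - C_{N+1-t} C_{N+1}) (A_t A_{N+1} - A_{t+1} A_N)`,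
obtained by multiplying the recursions for `A_N, A_{N+1}, A_{N+2}` crosswise: each summand is a
product of two nonnegative factors (log-convexity of `C`, induction hypothesis), and the first term
is nonnegative because `C_{N+1} A_{N+1} ≤ C_{N+2} A_N`, again by log-convexity of `C`.
Conversely `2 A₂ = C₁² + C₂`, so `A₁² ≤ A₀ A₂` forces `C₁² ≤ C₂`. The `B`-inequalities are the
`A`-inequalities multiplied by `(n+1) m! n!`.
-/

open Finset
open scoped Nat

section LogConvex

variable {s : ℕ → ℝ}

theorem eq_zero_of_sq_le_mul (hs : ∀ k, s (k + 1) ^ 2 ≤ s k * s (k + 2)) {j : ℕ} (hj : s j = 0) :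
    ∀ k, s (j + k) = 0
  | 0 => hj
  | k + 1 => by
    have := hs (j + k)
    rw [eq_zero_of_sq_le_mul hs hj k, zero_mul] at this
    exact pow_eq_zero_iff two_ne_zero |>.1 <| le_antisymm this (sq_nonneg _)

theorem pos_of_sq_le_mul (hs : ∀ k, s (k + 1) ^ 2 ≤ s k * s (k + 2)) (h₀ : 0 < s 0)
    (h₁ : 0 < s 1) (k : ℕ) : 0 < s k := by
  suffices ∀ k, 0 < s k ∧ 0 < s (k + 1) from (this k).1
  intro k
  induction k with
  | zero => exact ⟨h₀, h₁⟩
  | succ k ih => exact ⟨ih.2, pos_of_mul_pos_right ((pow_pos ih.2 2).trans_le (hs k)) ih.1.le⟩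

theorem succ_mul_le_mul_succ_of_sq_le_mul (hpos : ∀ k, 0 < s k) {i j : ℕ} (hij : i ≤ j)
    (hs : ∀ k < j, s (k + 1) ^ 2 ≤ s k * s (k + 2)) : s (i + 1) * s j ≤ s i * s (j + 1) := by
  induction j, hij using Nat.le_induction with
  | base => rw [mul_comm]
  | succ j hij ih =>
    have h₁ := ih fun k hk => hs k (by omega)
    have h₂ := hs j (by omega)
    refine le_of_mul_le_mul_right ?_ (mul_pos (hpos j) (hpos (j + 1)))
    calc s (i + 1) * s (j + 1) * (s j * s (j + 1)) = s (i + 1) * s j * s (j + 1) ^ 2 := by ring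
      _ ≤ s i * s (j + 1) * (s j * s (j + 2)) :=
        mul_le_mul h₁ h₂ (sq_nonneg _) (mul_pos (hpos i) (hpos (j + 1))).le
      _ = s i * s (j + 1 + 1) * (s j * s (j + 1)) := by ring

end LogConvex

/-- With `C 0 = 1`, this recursion says `∑ₖ A k uᵏ = exp (∑_{j ≥ 1} C j uʲ / j)`. -/
structure ExpRecurrence (C A : ℕ → ℝ) : Prop where
  C_zero : C 0 = 1
  A_zero : A 0 = 1
  conv : ∀ n : ℕ, ∑ t ∈ range (n + 1), C (n - t) * A t = (n + 1) * A n

namespace ExpRecurrence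

variable {C A : ℕ → ℝ}

theorem of_sum_Icc (hA₀ : A 0 = 1)
    (hrec : ∀ n : ℕ, ((n : ℝ) + 1) * A (n + 1) = ∑ j ∈ Icc 1 (n + 1), C j * A (n + 1 - j)) :
    ExpRecurrence (Function.update C 0 1) A := by
  refine ⟨by simp, hA₀, fun n => ?_⟩
  cases n with
  | zero => simp [hA₀]
  | succ n =>
    rw [sum_range_succ, Nat.sub_self, Function.update_self, one_mul]
    have hsum : ∑ t ∈ range (n + 1), Function.update C 0 1 (n + 1 - t) * A t
        = ∑ j ∈ Icc 1 (n + 1), C j * A (n + 1 - j) := by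
      refine sum_nbij' (fun t => n + 1 - t) (fun j => n + 1 - j) ?_ ?_ ?_ ?_ ?_
      all_goals intro t ht; simp only [mem_range, mem_Icc] at ht ⊢
      any_goals omega
      rw [Function.update_of_ne (by omega), Nat.sub_sub_self (by omega)]
    rw [hsum, ← hrec]
    push_cast
    ring

variable (h : ExpRecurrence C A)
include h

theorem succ_mul_eq (n : ℕ) :
    (n + 1) * A (n + 1) = ∑ t ∈ range (n + 1), C (n + 1 - t) * A t := by
  have := h.conv (n + 1)
  rw [sum_range_succ, Nat.sub_self, h.C_zero, one_mul] at this
  push_cast at this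
  linarith

theorem sum_range_mul_succ (n : ℕ) :
    ∑ t ∈ range (n + 1), C (n - t) * A (t + 1) = (n + 2) * A (n + 1) - C (n + 1) := by
  have := h.conv (n + 1)
  rw [sum_range_succ', h.A_zero, mul_one] at this
  simp only [Nat.add_sub_add_right, Nat.sub_zero] at this
  push_cast at this
  linarith

theorem sq_le_mul_iff : A 1 ^ 2 ≤ A 0 * A 2 ↔ C 1 ^ 2 ≤ C 2 := by
  have h₁ := h.succ_mul_eq 0
  have h₂ := h.succ_mul_eq 1
  simp only [sum_range_succ, sum_range_zero, h.A_zero] at h₁ h₂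
  norm_num at h₁ h₂
  rw [h.A_zero, one_mul, h₁, sq]
  rw [h₁] at h₂
  constructor <;> intro <;> linarith

theorem pos (hC : ∀ k, 0 ≤ C k) (hC₁ : 0 < C 1) (n : ℕ) : 0 < A n := by
  induction n using Nat.strong_induction_on with
  | _ n ih =>
    cases n with
    | zero => rw [h.A_zero]; exact one_pos
    | succ n =>
      have hlast : C 1 * A n ≤ ∑ t ∈ range (n + 1), C (n + 1 - t) * A t := by
        have := single_le_sum (f := fun t => C (n + 1 - t) * A t)
          (fun t ht => mul_nonneg (hC _) (ih t (by simp at ht; omega)).le) (self_mem_range_succ n)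
        simpa using this
      rw [← h.succ_mul_eq] at hlast
      exact pos_of_mul_pos_right ((mul_pos hC₁ (ih n (by omega))).trans_le hlast) (by positivity)

theorem succ_eq_zero (hC : ∀ k, C (k + 1) = 0) (n : ℕ) : A (n + 1) = 0 := by
  have := h.succ_mul_eq n
  rw [sum_eq_zero fun t ht => by
    rw [show n + 1 - t = n - t + 1 by simp at ht; omega, hC, zero_mul]] at this
  exact (mul_eq_zero.1 this).resolve_left (by positivity)

theorem mul_succ_le {n : ℕ} (hC : ∀ k ≤ n, C (k + 1) * C (n + 1) ≤ C k * C (n + 2))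
    (hA : ∀ t, 0 ≤ A t) : C (n + 1) * A (n + 1) ≤ C (n + 2) * A n := by
  refine le_of_mul_le_mul_left ?_ (by positivity : (0 : ℝ) < n + 1)
  calc (n + 1 : ℝ) * (C (n + 1) * A (n + 1))
      = ∑ t ∈ range (n + 1), C (n + 1 - t) * C (n + 1) * A t := by
        rw [mul_left_comm, h.succ_mul_eq, mul_sum]
        exact sum_congr rfl fun t _ => by ring
    _ ≤ ∑ t ∈ range (n + 1), C (n - t) * C (n + 2) * A t := by
        refine sum_le_sum fun t ht => mul_le_mul_of_nonneg_right ?_ (hA t)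
        rw [mem_range] at ht
        rw [show n + 1 - t = n - t + 1 by omega]
        exact hC (n - t) (by omega)
    _ = (n + 1) * (C (n + 2) * A n) := by
        rw [mul_left_comm, ← h.conv, mul_sum]
        exact sum_congr rfl fun t _ => by ring

theorem mul_sq_sub_eq (N : ℕ) :
    C (N + 1) * ((N + 2) * (A N * A (N + 2) - A (N + 1) ^ 2)) =
      A (N + 1) * (C (N + 2) * A N - C (N + 1) * A (N + 1)) +
      ∑ t ∈ range (N + 1), (C (N - t) * C (N + 2) - C (N + 1 - t) * C (N + 1)) *
        (A t * A (N + 1) - A (t + 1) * A N) := by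
  have e₁ := h.conv N
  have e₂ := h.sum_range_mul_succ N
  have e₃ := h.succ_mul_eq N
  have e₄ := h.sum_range_mul_succ (N + 1)
  rw [sum_range_succ, Nat.sub_self, h.C_zero, one_mul] at e₄
  have hexpand : ∑ t ∈ range (N + 1), (C (N - t) * C (N + 2) - C (N + 1 - t) * C (N + 1)) *
        (A t * A (N + 1) - A (t + 1) * A N) =
      C (N + 2) * A (N + 1) * ∑ t ∈ range (N + 1), C (N - t) * A t
        - C (N + 2) * A N * ∑ t ∈ range (N + 1), C (N - t) * A (t + 1)
        - C (N + 1) * A (N + 1) * ∑ t ∈ range (N + 1), C (N + 1 - t) * A t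
        + C (N + 1) * A N * ∑ t ∈ range (N + 1), C (N + 1 - t) * A (t + 1) := by
    simp only [mul_sum, ← sum_sub_distrib, ← sum_add_distrib]
    exact sum_congr rfl fun t _ => by ring
  rw [hexpand, e₁, e₂, ← e₃, eq_sub_of_add_eq e₄]
  push_cast
  ring

theorem sq_le_mul {N : ℕ} (hC : ∀ k ≤ N, C (k + 1) * C (N + 1) ≤ C k * C (N + 2))
    (hCN : 0 < C (N + 1)) (hA : ∀ t, 0 ≤ A t)
    (hAN : ∀ t ≤ N, A (t + 1) * A N ≤ A t * A (N + 1)) :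
    A (N + 1) ^ 2 ≤ A N * A (N + 2) := by
  have hsum : 0 ≤ ∑ t ∈ range (N + 1), (C (N - t) * C (N + 2) - C (N + 1 - t) * C (N + 1)) *
      (A t * A (N + 1) - A (t + 1) * A N) := by
    refine sum_nonneg fun t ht => mul_nonneg (sub_nonneg.2 ?_) (sub_nonneg.2 ?_)
    · rw [mem_range] at ht
      rw [show N + 1 - t = N - t + 1 by omega]
      exact hC (N - t) (by omega)
    · exact hAN t (by simpa [Nat.lt_succ_iff] using ht)
  have hlhs : 0 ≤ C (N + 1) * ((N + 2) * (A N * A (N + 2) - A (N + 1) ^ 2)) := by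
    rw [h.mul_sq_sub_eq]
    exact add_nonneg (mul_nonneg (hA _) (sub_nonneg.2 (h.mul_succ_le hC hA))) hsum
  have := (mul_nonneg_iff_of_pos_left (by positivity)).1 ((mul_nonneg_iff_of_pos_left hCN).1 hlhs)
  linarith

theorem succ_mul_le_mul_succ (hC : ∀ k, 0 ≤ C k) (hlc : ∀ k, C (k + 1) ^ 2 ≤ C k * C (k + 2))
    {i j : ℕ} (hij : i ≤ j) : A (i + 1) * A j ≤ A i * A (j + 1) := by
  rcases (hC 1).eq_or_lt with hC₁ | hC₁
  · -- `C 1 = 0` forces `A = (1, 0, 0, …)`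
    have hA := h.succ_eq_zero fun k => by
      simpa [add_comm] using eq_zero_of_sq_le_mul hlc hC₁.symm k
    simp [hA]
  have hCpos := pos_of_sq_le_mul hlc (h.C_zero ▸ one_pos) hC₁
  have hApos := h.pos hC hC₁
  have hCratio (N : ℕ) : ∀ k ≤ N, C (k + 1) * C (N + 1) ≤ C k * C (N + 2) := fun k hk =>
    succ_mul_le_mul_succ_of_sq_le_mul hCpos (by omega) fun k _ => hlc k
  have hAlc (N : ℕ) : A (N + 1) ^ 2 ≤ A N * A (N + 2) := by
    induction N using Nat.strong_induction_on with
    | _ N ih =>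
      exact h.sq_le_mul (hCratio N) (hCpos _) (fun t => (hApos t).le)
        fun t ht => succ_mul_le_mul_succ_of_sq_le_mul hApos ht ih
  exact succ_mul_le_mul_succ_of_sq_le_mul hApos hij fun k _ => hAlc k

theorem forall_mul_le_mul_iff (hC : ∀ k, 0 ≤ C k)
    (hlc : ∀ k, C (k + 2) ^ 2 ≤ C (k + 1) * C (k + 3)) :
    (∀ m n : ℕ, 1 ≤ m → m ≤ n → A m * A n ≤ A (m - 1) * A (n + 1)) ↔ C 1 ^ 2 ≤ C 2 := by
  refine ⟨fun hA => h.sq_le_mul_iff.1 (by simpa [sq] using hA 1 1 le_rfl le_rfl), fun h₁₂ => ?_⟩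
  rintro m n hm hmn
  obtain ⟨i, rfl⟩ := Nat.exists_eq_add_of_le' hm
  refine h.succ_mul_le_mul_succ hC (fun k => ?_) (by omega)
  rcases k with _ | k
  · simpa [h.C_zero] using h₁₂
  · exact hlc k

end ExpRecurrence

theorem mul_factorial_le_iff {A B : ℕ → ℝ} (hB : ∀ k, B k = k ! * A k) {m n : ℕ} (hm : 1 ≤ m) :
    (n + 1 : ℝ) * (B m * B n) ≤ m * (B (m - 1) * B (n + 1)) ↔
      A m * A n ≤ A (m - 1) * A (n + 1) := by
  obtain ⟨m, rfl⟩ := Nat.exists_eq_add_of_le' hm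
  have hK : (0 : ℝ) < (n + 1) * (m + 1) ! * n ! := by positivity
  have e₁ : (n + 1 : ℝ) * (B (m + 1) * B n) = (n + 1) * (m + 1) ! * n ! * (A (m + 1) * A n) := by
    rw [hB, hB]; ring
  have e₂ : ((m + 1 : ℕ) : ℝ) * (B (m + 1 - 1) * B (n + 1))
      = (n + 1) * (m + 1) ! * n ! * (A (m + 1 - 1) * A (n + 1)) := by
    rw [hB, hB, Nat.add_sub_cancel, Nat.factorial_succ m, Nat.factorial_succ n]; push_cast; ring
  rw [e₁, e₂, mul_le_mul_iff_of_pos_left hK]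

/-- for `i = 1, …, w` let `(c_{i,k})_{k ≥ 1}` be nonnegative log-convex
real sequences, `C j = ∑ᵢ c_{i,j}`, `(A k)` given by the exponential-formula recursion,
and `B k = k! * A k`.  Then `m B_{m-1} B_{n+1} ≥ (n+1) Bₘ Bₙ` for all `1 ≤ m ≤ n` iff
`∑ᵢ c_{i,2} ≥ (∑ᵢ c_{i,1})²`; moreover these inequalities are equivalent to
`A_{m-1} A_{n+1} ≥ Aₘ Aₙ` for all `1 ≤ m ≤ n`. -/
theorem stmt15 (w : ℕ) (c : Fin w → ℕ → ℝ)
    (hc_nonneg : ∀ (i : Fin w) (k : ℕ), 1 ≤ k → 0 ≤ c i k)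
    (hc_logconvex : ∀ (i : Fin w) (k : ℕ), 1 ≤ k →
      c i (k + 1) ^ 2 ≤ c i k * c i (k + 2))
    (A B : ℕ → ℝ)
    (hA0 : A 0 = 1)
    (hArec : ∀ n : ℕ, ((n : ℝ) + 1) * A (n + 1)
      = ∑ j ∈ Finset.Icc 1 (n + 1), (∑ i : Fin w, c i j) * A (n + 1 - j))
    (hB : ∀ k : ℕ, B k = (Nat.factorial k : ℝ) * A k) :
    ((∀ m n : ℕ, 1 ≤ m → m ≤ n →
        ((n : ℝ) + 1) * (B m * B n) ≤ (m : ℝ) * (B (m - 1) * B (n + 1))) ↔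
      (∑ i : Fin w, c i 1) ^ 2 ≤ ∑ i : Fin w, c i 2) ∧
    ((∀ m n : ℕ, 1 ≤ m → m ≤ n →
        ((n : ℝ) + 1) * (B m * B n) ≤ (m : ℝ) * (B (m - 1) * B (n + 1))) ↔
      (∀ m n : ℕ, 1 ≤ m → m ≤ n → A m * A n ≤ A (m - 1) * A (n + 1))) := by
  set C := Function.update (fun j => ∑ i : Fin w, c i j) 0 1
  have h : ExpRecurrence C A := ExpRecurrence.of_sum_Icc hA0 hArec
  have hC (k : ℕ) : 0 ≤ C k := by
    rcases k with _ | k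
    · simp [C]
    · simpa [C] using sum_nonneg fun i _ => hc_nonneg i (k + 1) (by omega)
  have hlc (k : ℕ) : C (k + 2) ^ 2 ≤ C (k + 1) * C (k + 3) := by
    simpa [C] using sum_sq_le_sum_mul_sum_of_sq_le_mul _ (fun i _ => hc_nonneg i (k + 1) (by omega))
      (fun i _ => hc_nonneg i (k + 3) (by omega)) fun i _ => hc_logconvex i (k + 1) (by omega)
  have hBA : (∀ m n : ℕ, 1 ≤ m → m ≤ n →
      ((n : ℝ) + 1) * (B m * B n) ≤ (m : ℝ) * (B (m - 1) * B (n + 1))) ↔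
      ∀ m n : ℕ, 1 ≤ m → m ≤ n → A m * A n ≤ A (m - 1) * A (n + 1) :=
    forall₂_congr fun m n => imp_congr_right fun hm => imp_congr_right fun _ =>
      mul_factorial_le_iff hB hm
  refine ⟨hBA.trans ((h.forall_mul_le_mul_iff hC hlc).trans ?_), hBA⟩
  simp [C]
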